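/- arXiv:1807.05082 — 2 statements merged into one kernel-verified Lean document; each statement's English description precedes it below -/
import Mathlib

section
/- (Entropy bounds for the a posteriori covariance) Under the stated assumptions, the a posteriori error covariance Σ̄ := (Cᵀ V⁻¹ C + Σ⁻¹)⁻¹ satisfies n·ln( 1/(M + 1/λ_min(W)) ) ≤ ln det(Σ̄) ≤ n·ln(1/m). -/
/-!
By the Woodbury identity, `Σ̄ = Σ - Σ Cᵀ (C Σ Cᵀ + V)⁻¹ C Σ`, so the Riccati equation reads
`Σ = A Σ̄ Aᵀ + W` and hence `λ_min(W) • 1 ≤ W ≤ Σ` in the Loewner order. Inverting gives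
`Σ⁻¹ ≤ λ_min(W)⁻¹ • 1`, so `Σ̄⁻¹ = Cᵀ V⁻¹ C + Σ⁻¹` lies between `m • 1` and `(M + 1/λ_min(W)) • 1`.
Its eigenvalues therefore lie in `[m, M + 1/λ_min(W)]`, which bounds its determinant.
-/

open Matrix
open scoped MatrixOrder

lemma lt_ciInf_of_finite {ι α : Type*} [Finite ι] [Nonempty ι] [ConditionallyCompleteLinearOrder α]
    {f : ι → α} {a : α} (h : ∀ i, a < f i) : a < ⨅ i, f i := by
  obtain ⟨i, hi⟩ := exists_eq_ciInf_of_finite (f := f)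
  exact (h i).trans_eq hi

namespace Matrix

variable {n : Type*} [DecidableEq n]

lemma diagonal_mono {d e : n → ℝ} (h : d ≤ e) : diagonal d ≤ diagonal e := by
  rw [le_iff, diagonal_sub]
  exact posSemidef_diagonal_iff.mpr fun i => sub_nonneg.mpr (h i)

variable [Fintype n]

lemma transpose_diagonal_mul_inv_diagonal_mul_diagonal {c v : n → ℝ} (hv : ∀ i, v i ≠ 0) :
    (diagonal c)ᵀ * (diagonal v)⁻¹ * diagonal c = diagonal fun i => c i ^ 2 / v i := by
  have hu : IsUnit v := Pi.isUnit_iff.mpr fun i => (hv i).isUnit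
  rw [diagonal_transpose, inv_diagonal, Ring.inverse_of_isUnit hu, diagonal_mul_diagonal,
    diagonal_mul_diagonal]
  congr 1
  funext i
  simp only [Units.val_inv_eq_inv_val, IsUnit.unit_spec, Pi.inv_apply]
  ring

lemma IsHermitian.smul_one_le_iff {A : Matrix n n ℝ} (hA : A.IsHermitian) {r : ℝ} :
    r • 1 ≤ A ↔ ∀ i, r ≤ hA.eigenvalues i := by
  rw [← Algebra.algebraMap_eq_smul_one, algebraMap_le_iff_le_spectrum (R := ℝ) hA.isSelfAdjoint,
    hA.spectrum_real_eq_range_eigenvalues, Set.forall_mem_range]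

lemma IsHermitian.le_smul_one_iff {A : Matrix n n ℝ} (hA : A.IsHermitian) {r : ℝ} :
    A ≤ r • 1 ↔ ∀ i, hA.eigenvalues i ≤ r := by
  rw [← Algebra.algebraMap_eq_smul_one, le_algebraMap_iff_spectrum_le (R := ℝ) hA.isSelfAdjoint,
    hA.spectrum_real_eq_range_eigenvalues, Set.forall_mem_range]

lemma PosDef.inv_le_inv_smul_one {S : Matrix n n ℝ} (hS : S.PosDef) {r : ℝ} (hr : 0 < r)
    (h : r • 1 ≤ S) : S⁻¹ ≤ r⁻¹ • 1 := by
  have hspec : ∀ x ∈ spectrum ℝ S, r ≤ x := by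
    rwa [← Algebra.algebraMap_eq_smul_one,
      algebraMap_le_iff_le_spectrum (R := ℝ) hS.isHermitian.isSelfAdjoint] at h
  rw [nonsing_inv_eq_ringInverse,
    ← cfc_ringInverse_id (R := ℝ) (a := S) hS.isUnit hS.isHermitian.isSelfAdjoint,
    ← Algebra.algebraMap_eq_smul_one]
  refine cfc_le_algebraMap _ _ _ (fun x hx => inv_anti₀ hr (hspec x hx)) ?_
    hS.isHermitian.isSelfAdjoint
  exact continuousOn_inv₀.mono fun x hx => (hr.trans_le (hspec x hx)).ne'

lemma IsHermitian.pow_card_le_det {A : Matrix n n ℝ} (hA : A.IsHermitian) {r : ℝ} (hr : 0 ≤ r)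
    (h : r • 1 ≤ A) : r ^ Fintype.card n ≤ A.det := by
  rw [hA.det_eq_prod_eigenvalues, ← Finset.card_univ, ← Finset.prod_const]
  have hr_le := hA.smul_one_le_iff.mp h
  exact Finset.prod_le_prod (fun _ _ => hr) fun i _ => by simpa using hr_le i

lemma PosSemidef.det_le_pow_card {A : Matrix n n ℝ} (hA : A.PosSemidef) {r : ℝ}
    (h : A ≤ r • 1) : A.det ≤ r ^ Fintype.card n := by
  rw [hA.isHermitian.det_eq_prod_eigenvalues, ← Finset.card_univ, ← Finset.prod_const]
  have hle_r := hA.isHermitian.le_smul_one_iff.mp h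
  exact Finset.prod_le_prod (fun i _ => by simpa using hA.eigenvalues_nonneg i)
    fun i _ => by simpa using hle_r i

lemma PosDef.log_det_inv_bounds {T : Matrix n n ℝ} (hT : T.PosDef) {a b : ℝ} (ha : 0 < a)
    (hlo : a • 1 ≤ T) (hhi : T ≤ b • 1) :
    Fintype.card n * Real.log (1 / b) ≤ Real.log T⁻¹.det ∧
      Real.log T⁻¹.det ≤ Fintype.card n * Real.log (1 / a) := by
  have hdet_lo := hT.isHermitian.pow_card_le_det ha.le hlo
  have hdet_hi := hT.posSemidef.det_le_pow_card hhi
  rw [det_nonsing_inv, Ring.inverse_eq_inv, Real.log_inv, one_div, one_div, Real.log_inv,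
    Real.log_inv, mul_neg, mul_neg, neg_le_neg_iff, neg_le_neg_iff, ← Real.log_pow,
    ← Real.log_pow]
  exact ⟨Real.log_le_log hT.det_pos hdet_hi, Real.log_le_log (by positivity) hdet_lo⟩

variable {m : Type*} [Fintype m] [DecidableEq m]

lemma PosDef.sub_mul_inv_mul_eq_inv {S : Matrix n n ℝ} {V : Matrix m m ℝ} (hS : S.PosDef)
    (hV : V.PosDef) (C : Matrix m n ℝ) :
    S - S * Cᵀ * (C * S * Cᵀ + V)⁻¹ * C * S = (Cᵀ * V⁻¹ * C + S⁻¹)⁻¹ := by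
  have hK : (C * S * Cᵀ + V).PosDef := by
    simpa [conjTranspose_eq_transpose_of_trivial] using
      hV.posSemidef_add (hS.posSemidef.mul_mul_conjTranspose_same C)
  rw [add_comm (Cᵀ * V⁻¹ * C), add_mul_mul_inv_eq_sub _ _ _ _ hS.inv.isUnit hV.inv.isUnit]
  all_goals
    simp only [nonsing_inv_nonsing_inv _ hS.det_pos.ne'.isUnit,
      nonsing_inv_nonsing_inv _ hV.det_pos.ne'.isUnit, add_comm V]
  exact hK.isUnit

lemma PosDef.le_of_riccati {A W S : Matrix n n ℝ} {V : Matrix m m ℝ} {C : Matrix m n ℝ}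
    (hS : S.PosDef) (hV : V.PosDef)
    (hric : S = A * S * Aᵀ - A * S * Cᵀ * (C * S * Cᵀ + V)⁻¹ * C * S * Aᵀ + W) : W ≤ S := by
  have hpost : (Cᵀ * V⁻¹ * C + S⁻¹)⁻¹.PosDef := by
    refine (PosDef.posSemidef_add ?_ hS.inv).inv
    simpa [conjTranspose_eq_transpose_of_trivial] using
      hV.inv.posSemidef.conjTranspose_mul_mul_same C
  have hSW : S - W = A * (Cᵀ * V⁻¹ * C + S⁻¹)⁻¹ * Aᵀ := by
    rw [← hS.sub_mul_inv_mul_eq_inv hV C]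
    nth_rw 1 [hric]
    simp only [Matrix.mul_sub, Matrix.sub_mul, Matrix.mul_assoc, add_sub_cancel_right]
  rw [le_iff, hSW, ← conjTranspose_eq_transpose_of_trivial]
  exact hpost.posSemidef.mul_mul_conjTranspose_same A

end Matrix

/-- Entropy bounds for the a posteriori covariance `S̄ = (Cᵀ V⁻¹ C + S⁻¹)⁻¹`:
`n·ln(1/(M + 1/λ_min(W))) ≤ ln det S̄ ≤ n·ln(1/m)`, where
`m = min_i c_i²/σ_i²` and `M = max_i c_i²/σ_i²`. -/
theorem riccati_posterior_logdet_bounds {n : ℕ} (hn : 1 ≤ n)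
    (A W S : Matrix (Fin n) (Fin n) ℝ)
    (c σ : Fin n → ℝ) (hc : ∀ i, 0 < c i) (hσ : ∀ i, 0 < σ i)
    (hW : W.PosDef) (hS : S.PosDef)
    (hric : S = A * S * Aᵀ -
        A * S * (Matrix.diagonal c)ᵀ *
          (Matrix.diagonal c * S * (Matrix.diagonal c)ᵀ +
            Matrix.diagonal fun i => σ i ^ 2)⁻¹ *
          Matrix.diagonal c * S * Aᵀ + W) :
    (n : ℝ) * Real.log (1 / ((⨆ i, c i ^ 2 / σ i ^ 2) + 1 / ⨅ j, hW.1.eigenvalues j)) ≤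
        Real.log (((Matrix.diagonal c)ᵀ * (Matrix.diagonal fun i => σ i ^ 2)⁻¹ *
          Matrix.diagonal c + S⁻¹)⁻¹).det ∧
      Real.log (((Matrix.diagonal c)ᵀ * (Matrix.diagonal fun i => σ i ^ 2)⁻¹ *
          Matrix.diagonal c + S⁻¹)⁻¹).det ≤
        (n : ℝ) * Real.log (1 / ⨅ i, c i ^ 2 / σ i ^ 2) := by
  have : Nonempty (Fin n) := ⟨⟨0, hn⟩⟩
  have hV : (diagonal fun i => σ i ^ 2).PosDef := posDef_diagonal_iff.mpr fun i => pow_pos (hσ i) 2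
  rw [transpose_diagonal_mul_inv_diagonal_mul_diagonal fun i => (pow_pos (hσ i) 2).ne']
  set d : Fin n → ℝ := fun i => c i ^ 2 / σ i ^ 2
  have hd : ∀ i, 0 < d i := fun i => div_pos (pow_pos (hc i) 2) (pow_pos (hσ i) 2)
  set lam := ⨅ j, hW.1.eigenvalues j
  have hlam : 0 < lam := lt_ciInf_of_finite hW.eigenvalues_pos
  have hWlam : lam • 1 ≤ W :=
    hW.isHermitian.smul_one_le_iff.mpr fun j => ciInf_le (Finite.bddBelow_range _) j
  have hSinv : S⁻¹ ≤ lam⁻¹ • 1 :=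
    hS.inv_le_inv_smul_one hlam (hWlam.trans (hS.le_of_riccati hV hric))
  have hlo : (⨅ i, d i) • (1 : Matrix (Fin n) (Fin n) ℝ) ≤ diagonal d + S⁻¹ := by
    rw [smul_one_eq_diagonal]
    exact le_add_of_le_of_nonneg (diagonal_mono fun i => ciInf_le (Finite.bddBelow_range d) i)
      (nonneg_iff_posSemidef.mpr hS.inv.posSemidef)
  have hhi : diagonal d + S⁻¹ ≤ ((⨆ i, d i) + 1 / lam) • 1 := by
    rw [add_smul, smul_one_eq_diagonal (⨆ i, d i), one_div]
    exact add_le_add (diagonal_mono fun i => le_ciSup (Finite.bddAbove_range d) i) hSinv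
  have hT : (diagonal d + S⁻¹).PosDef := (posDef_diagonal_iff.mpr hd).add hS.inv
  simpa only [Fintype.card_fin] using hT.log_det_inv_bounds (lt_ciInf_of_finite hd) hlo hhi
end

section
/- (Privacy calibration for a posteriori estimation error) In addition to the stated filtering assumptions, suppose for each i that the privacy-noise standard deviation is σ_i = (Δ_i/(2ε_i))·(K_i + √(K_i² + 2ε_i)) with Δ_i > 0, ε_i > 0, and K_i ∈ [1, 4.5]. Let B_l, B_u be given with 0 < B_l < n·λ_min(W) and B_u > 0. Let u be an index maximizing c_i²/σ_i² and l an index minimizing c_i²/σ_i², and define for each i: η₃ᵢ := √( B_l·c_u² / ( Δ_i²·( n − B_l/λ_min(W) ) ) ) and η₄ᵢ := √( B_u·c_l² / ( n·Δ_i² ) ). If for every i, (1/8)·((1 + √(36η₄ᵢ + 1))/η₄ᵢ)² ≤ ε_i ≤ 1/η₃ᵢ, then B_l ≤ tr(Σ̄) ≤ B_u, where Σ̄ := (Cᵀ V⁻¹ C + Σ⁻¹)⁻¹. -/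
/-!
With `G = Cᵀ V⁻¹ C = diag (cᵢ² / σᵢ²)`, the Riccati equation writes `Σ - W` as `A P Aᵀ` where
`P` is the (positive semidefinite) Joseph-form measurement update of `Σ`; hence `W ≤ Σ` in the
Loewner order and `Σ⁻¹ ≤ W⁻¹ ≤ λ_min(W)⁻¹ I`. This sandwiches
`G ≤ G + Σ⁻¹ ≤ (c_u² / σ_u² + λ_min(W)⁻¹) I`, and since inversion is Loewner-antitone, taking
traces gives `n / (c_u² / σ_u² + λ_min(W)⁻¹) ≤ tr Σ̄ ≤ ∑ σᵢ² / cᵢ² ≤ n σ_l² / c_l²`.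
The two ends of the calibration window say `Δ_u η₃ ≤ σ_u` and `σ_l ≤ Δ_l η₄`, which turn these
into `B_l ≤ tr Σ̄ ≤ B_u`.
-/

open Matrix
open scoped MatrixOrder ComplexOrder

namespace Matrix

section RCLike

variable {ι 𝕜 : Type*} [RCLike 𝕜]

theorem PosDef.of_le {P Q : Matrix ι ι 𝕜} (hP : P.PosDef) (h : P ≤ Q) : Q.PosDef := by
  simpa using hP.add_posSemidef (le_iff.mp h)

variable [Fintype ι] [DecidableEq ι]

theorem PosDef.inv_anti {P Q : Matrix ι ι 𝕜} (hP : P.PosDef) (h : P ≤ Q) : Q⁻¹ ≤ P⁻¹ := by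
  have hQ : Q.PosDef := hP.of_le h
  have hP' : IsUnit P.det := (isUnit_iff_isUnit_det _).mp hP.isUnit
  have hQ' : IsUnit Q.det := (isUnit_iff_isUnit_det _).mp hQ.isUnit
  have key : Q⁻¹ * ((Q - P) * P⁻¹ * (Q - P)ᴴ + (Q - P)) * Q⁻¹ᴴ = P⁻¹ - Q⁻¹ := by
    rw [(le_iff.mp h).isHermitian.eq, hQ.inv.isHermitian.eq]
    simp only [Matrix.sub_mul, Matrix.mul_sub, Matrix.mul_add, Matrix.add_mul, Matrix.mul_assoc,
      nonsing_inv_mul _ hP', mul_nonsing_inv _ hP', nonsing_inv_mul _ hQ', mul_nonsing_inv _ hQ',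
      nonsing_inv_mul_cancel_left _ _ hQ', Matrix.mul_one, Matrix.one_mul]
    abel
  have hmid : ((Q - P) * P⁻¹ * (Q - P)ᴴ + (Q - P)).PosSemidef :=
    (hP.inv.posSemidef.mul_mul_conjTranspose_same _).add (le_iff.mp h)
  rw [le_iff, ← key]
  exact hmid.mul_mul_conjTranspose_same _

theorem IsHermitian.smul_one_le {A : Matrix ι ι 𝕜} (hA : A.IsHermitian) {μ : ℝ}
    (h : ∀ i, μ ≤ hA.eigenvalues i) : μ • (1 : Matrix ι ι 𝕜) ≤ A := by
  rw [le_iff, posSemidef_iff_isHermitian_and_spectrum_nonneg]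
  have : μ • (1 : Matrix ι ι 𝕜) = algebraMap 𝕜 _ (μ : 𝕜) := by
    rw [Algebra.algebraMap_eq_smul_one, RCLike.real_smul_eq_coe_smul (K := 𝕜)]
  refine ⟨hA.sub (isHermitian_one.smul (IsSelfAdjoint.all μ)), ?_⟩
  rw [this, ← spectrum.sub_singleton_eq, hA.spectrum_eq_image_range]
  rintro _ ⟨_, ⟨_, ⟨i, rfl⟩, rfl⟩, _, rfl, rfl⟩
  simpa [sub_nonneg] using h i

end RCLike

theorem diagonal_le_smul_one {ι : Type*} [DecidableEq ι] {g : ι → ℝ} {γ : ℝ} (h : ∀ i, g i ≤ γ) :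
    diagonal g ≤ γ • (1 : Matrix ι ι ℝ) := by
  rw [le_iff, smul_one_eq_diagonal, diagonal_sub, posSemidef_diagonal_iff]
  exact fun i => sub_nonneg.mpr (h i)

variable {ι m : Type*} [Fintype ι] [DecidableEq ι] [Fintype m] [DecidableEq m]

theorem PosSemidef.sub_mul_mul_inv_mul_mul {S : Matrix ι ι ℝ} {V : Matrix m m ℝ}
    (hS : S.PosSemidef) (hV : V.PosDef) (D : Matrix m ι ℝ) :
    (S - S * Dᵀ * (D * S * Dᵀ + V)⁻¹ * D * S).PosSemidef := by
  set N := D * S * Dᵀ + V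
  have hN : N.PosDef := by
    simpa [conjTranspose_eq_transpose_of_trivial] using
      PosDef.posSemidef_add (hS.mul_mul_conjTranspose_same D) hV
  have hN' : IsUnit N.det := (isUnit_iff_isUnit_det _).mp hN.isUnit
  have hNt : Nᵀ = N := by simpa [conjTranspose_eq_transpose_of_trivial] using hN.isHermitian.eq
  have hSt : Sᵀ = S := by simpa [conjTranspose_eq_transpose_of_trivial] using hS.isHermitian.eq
  set K := S * Dᵀ * N⁻¹
  have hKt : Kᵀ = N⁻¹ * D * S := by
    simp only [K, transpose_mul, transpose_nonsing_inv, transpose_transpose, hNt, hSt,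
      Matrix.mul_assoc]
  -- Joseph form: the update is a sum of two congruences of positive semidefinite matrices
  have joseph : (1 - K * D) * S * (1 - K * D)ᵀ + K * V * Kᵀ = S - K * D * S := by
    have hV : V = N - D * S * Dᵀ := by simp [N]
    rw [transpose_sub, transpose_one, transpose_mul, hKt, hV]
    simp only [K, Matrix.sub_mul, Matrix.mul_sub, Matrix.mul_one, Matrix.one_mul, Matrix.mul_assoc,
      mul_nonsing_inv_cancel_left _ _ hN']
    abel
  rw [← joseph]
  have h := (hS.mul_mul_conjTranspose_same (1 - K * D)).add
    (hV.posSemidef.mul_mul_conjTranspose_same K)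
  rwa [conjTranspose_eq_transpose_of_trivial, conjTranspose_eq_transpose_of_trivial] at h

theorem le_of_eq_riccati {A S W : Matrix ι ι ℝ} {D : Matrix m ι ℝ} {V : Matrix m m ℝ}
    (hS : S.PosSemidef) (hV : V.PosDef)
    (hric : S = A * S * Aᵀ - A * S * Dᵀ * (D * S * Dᵀ + V)⁻¹ * D * S * Aᵀ + W) : W ≤ S := by
  have h : S - W = A * (S - S * Dᵀ * (D * S * Dᵀ + V)⁻¹ * D * S) * Aᵀ := by
    rw [sub_eq_iff_eq_add.mpr hric]
    simp only [Matrix.mul_sub, Matrix.sub_mul, Matrix.mul_assoc]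
  rw [le_iff, h]
  simpa [conjTranspose_eq_transpose_of_trivial] using
    (hS.sub_mul_mul_inv_mul_mul hV D).mul_mul_conjTranspose_same A

theorem inv_diagonal_of_ne_zero {α : Type*} [Field α] {v : ι → α} (hv : ∀ i, v i ≠ 0) :
    (diagonal v)⁻¹ = diagonal v⁻¹ :=
  inv_eq_right_inv <| by simp [diagonal_mul_diagonal, mul_inv_cancel₀ (hv _)]

theorem diagonal_transpose_mul_inv_diagonal_mul {α : Type*} [Field α] (c : ι → α) {v : ι → α}
    (hv : ∀ i, v i ≠ 0) :
    (diagonal c)ᵀ * (diagonal v)⁻¹ * diagonal c = diagonal fun i => c i ^ 2 / v i := by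
  rw [diagonal_transpose, inv_diagonal_of_ne_zero hv, diagonal_mul_diagonal, diagonal_mul_diagonal]
  congr 1
  ext i
  simp only [Pi.inv_apply]
  ring

theorem inv_smul_one {α : Type*} [Field α] (a : α) : (a • (1 : Matrix ι ι α))⁻¹ = a⁻¹ • 1 := by
  rcases eq_or_ne a 0 with rfl | ha
  · simp
  · exact inv_eq_right_inv (by simp [smul_smul, ha])

theorem card_div_le_trace_inv {M : Matrix ι ι ℝ} (hM : M.PosDef) {a : ℝ} (h : M ≤ a • 1) :
    Fintype.card ι / a ≤ M⁻¹.trace := by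
  have h' := (tracePositiveLinearMap ι ℝ ℝ).monotone' (hM.inv_anti h)
  simpa [inv_smul_one, div_eq_inv_mul] using h'

theorem PosDef.trace_inv_add_le {G P : Matrix ι ι ℝ} (hG : G.PosDef) (hP : P.PosSemidef) :
    (G + P)⁻¹.trace ≤ G⁻¹.trace :=
  (tracePositiveLinearMap ι ℝ ℝ).monotone' (hG.inv_anti (le_add_of_nonneg_right hP.nonneg))

theorem diagonal_add_inv_le_smul_one {g : ι → ℝ} {γ μ : ℝ} {W S : Matrix ι ι ℝ}
    (hg : ∀ i, g i ≤ γ) (hμ : 0 < μ) (hμW : μ • 1 ≤ W) (hWS : W ≤ S) :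
    diagonal g + S⁻¹ ≤ (γ + μ⁻¹) • 1 := by
  have hW : W.PosDef := (PosDef.one.smul hμ).of_le hμW
  have hWinv : W⁻¹ ≤ μ⁻¹ • 1 := by simpa [inv_smul_one] using (PosDef.one.smul hμ).inv_anti hμW
  rw [add_smul]
  exact add_le_add (diagonal_le_smul_one hg) ((hW.inv_anti hWS).trans hWinv)

end Matrix

noncomputable def gaussianMechanismStd (Δ ε K : ℝ) : ℝ := Δ / (2 * ε) * (K + √(K ^ 2 + 2 * ε))

theorem mul_le_gaussianMechanismStd {Δ ε K η : ℝ} (hΔ : 0 ≤ Δ) (hε : 0 < ε) (hη : 0 < η)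
    (hK : 1 ≤ K) (h : ε ≤ 1 / η) : Δ * η ≤ gaussianMechanismStd Δ ε K := by
  have hsqrt : K ≤ √(K ^ 2 + 2 * ε) := Real.le_sqrt_of_sq_le (by linarith)
  have hη' : η ≤ 1 / ε := by rwa [le_div_iff₀ hε, mul_comm, ← le_div_iff₀ hη]
  calc Δ * η ≤ Δ * (1 / ε) := mul_le_mul_of_nonneg_left hη' hΔ
    _ = Δ / (2 * ε) * 2 := by field_simp
    _ ≤ gaussianMechanismStd Δ ε K := by
        unfold gaussianMechanismStd
        gcongr
        linarith

theorem gaussianMechanismStd_le_mul {Δ ε K η : ℝ} (hΔ : 0 ≤ Δ) (hη : 0 < η) (hK : K ≤ 4.5)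
    (h : 1 / 8 * ((1 + √(36 * η + 1)) / η) ^ 2 ≤ ε) : gaussianMechanismStd Δ ε K ≤ Δ * η := by
  set s := √(36 * η + 1)
  have hs : 0 ≤ s := Real.sqrt_nonneg _
  have hs2 : s ^ 2 = 36 * η + 1 := Real.sq_sqrt (by linarith)
  have hε : 0 < ε := lt_of_lt_of_le (by positivity) h
  set t := √(2 * ε)
  have ht : 0 < t := Real.sqrt_pos.mpr (by linarith)
  have ht2 : t ^ 2 = 2 * ε := Real.sq_sqrt (by linarith)
  have hst : 1 + s ≤ 2 * η * t := by
    rw [← pow_le_pow_iff_left₀ (by positivity) (by positivity) two_ne_zero, mul_pow, ht2]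
    rw [div_pow, one_div_mul_eq_div, div_le_iff₀ (by norm_num), div_le_iff₀ (by positivity)] at h
    linarith
  -- `t ≥ (1 + s) / (2η)` is exactly the condition that `t` lies beyond the positive root of
  -- `η t² - t - 9`
  have hquad : 9 + t ≤ η * t ^ 2 := by nlinarith
  have hsum : K + √(K ^ 2 + 2 * ε) ≤ 9 + t := by
    have : √(K ^ 2 + 2 * ε) ≤ |K| + t := by
      rw [Real.sqrt_le_left (by positivity), ← ht2, ← sq_abs K]
      nlinarith [abs_nonneg K]
    cases abs_cases K <;> norm_num at hK <;> linarith
  calc gaussianMechanismStd Δ ε K ≤ Δ / (2 * ε) * (9 + t) := by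
        unfold gaussianMechanismStd; gcongr
    _ ≤ Δ / (2 * ε) * (η * t ^ 2) := by gcongr
    _ = Δ * η := by rw [ht2]; field_simp

theorem sq_mul_sqrt_div_sq_mul {Δ a b : ℝ} (hΔ : Δ ≠ 0) (hab : 0 ≤ a / b) :
    (Δ * √(a / (Δ ^ 2 * b))) ^ 2 = a / b := by
  rw [mul_pow, div_mul_eq_div_div_swap, Real.sq_sqrt (by positivity)]
  field_simp

theorem div_le_gaussianMechanismStd_sq {Δ ε K a b : ℝ} (hΔ : 0 < Δ) (hε : 0 < ε) (hK : 1 ≤ K)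
    (ha : 0 < a) (hb : 0 < b) (h : ε ≤ 1 / √(a / (Δ ^ 2 * b))) :
    a / b ≤ gaussianMechanismStd Δ ε K ^ 2 := by
  rw [← sq_mul_sqrt_div_sq_mul hΔ.ne' (by positivity)]
  gcongr
  exact mul_le_gaussianMechanismStd hΔ.le hε (by positivity) hK h

theorem gaussianMechanismStd_sq_le_div {Δ ε K a b : ℝ} (hΔ : 0 < Δ) (hK : K ≤ 4.5)
    (ha : 0 < a) (hb : 0 < b)
    (h : 1 / 8 * ((1 + √(36 * √(a / (b * Δ ^ 2)) + 1)) / √(a / (b * Δ ^ 2))) ^ 2 ≤ ε)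
    (hσ : 0 ≤ gaussianMechanismStd Δ ε K) : gaussianMechanismStd Δ ε K ^ 2 ≤ a / b := by
  rw [mul_comm b] at h
  rw [← sq_mul_sqrt_div_sq_mul hΔ.ne' (by positivity)]
  gcongr
  exact gaussianMechanismStd_le_mul hΔ.le (by positivity) hK h

theorem le_div_sq_div_sq_add_inv {B N μ c σ : ℝ} (hB : 0 < B) (hμ : 0 < μ) (hσ : 0 < σ)
    (hN : B < N * μ) (h : B * c ^ 2 / (N - B / μ) ≤ σ ^ 2) :
    B ≤ N / (c ^ 2 / σ ^ 2 + μ⁻¹) := by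
  have hd : 0 < N - B / μ := by rw [sub_pos, div_lt_iff₀ hμ]; exact hN
  have hg : c ^ 2 / σ ^ 2 ≤ (N - B / μ) / B := by
    rw [div_le_iff₀ hd] at h
    rw [div_le_div_iff₀ (by positivity) hB]
    linarith
  rw [le_div_iff₀ (by positivity)]
  calc B * (c ^ 2 / σ ^ 2 + μ⁻¹) ≤ B * ((N - B / μ) / B + μ⁻¹) := by gcongr
    _ = N := by field_simp; ring

theorem mul_inv_sq_div_sq_le {B N c σ : ℝ} (hN : 0 < N) (hc : 0 < c)
    (h : σ ^ 2 ≤ B * c ^ 2 / N) : N * (c ^ 2 / σ ^ 2)⁻¹ ≤ B := by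
  rw [inv_div, ← mul_div_assoc, div_le_iff₀ (by positivity)]
  rw [le_div_iff₀ hN] at h
  linarith

theorem privacy_calibration_aposteriori_general {n : ℕ} (A W S : Matrix (Fin n) (Fin n) ℝ)
    (c σ : Fin n → ℝ) (hc : ∀ i, 0 < c i) (hσ : ∀ i, 0 < σ i)
    (hW : W.PosDef) (hS : S.PosDef)
    (hric : S = A * S * Aᵀ -
        A * S * (Matrix.diagonal c)ᵀ *
          (Matrix.diagonal c * S * (Matrix.diagonal c)ᵀ +
            Matrix.diagonal fun i => σ i ^ 2)⁻¹ *
          Matrix.diagonal c * S * Aᵀ + W)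
    (Δ ε Kd : Fin n → ℝ) (hΔ : ∀ i, 0 < Δ i) (hε : ∀ i, 0 < ε i)
    (hKd : ∀ i, 1 ≤ Kd i ∧ Kd i ≤ 4.5)
    (hσdef : ∀ i, σ i = Δ i / (2 * ε i) * (Kd i + Real.sqrt (Kd i ^ 2 + 2 * ε i)))
    (Bl Bu : ℝ) (hBl1 : 0 < Bl)
    (hBl2 : Bl < (n : ℝ) * ⨅ j, hW.1.eigenvalues j)
    (hBu : 0 < Bu)
    (u l : Fin n)
    (hu : ∀ i, c i ^ 2 / σ i ^ 2 ≤ c u ^ 2 / σ u ^ 2)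
    (hl : ∀ i, c l ^ 2 / σ l ^ 2 ≤ c i ^ 2 / σ i ^ 2)
    (hcal : ∀ i,
      (1 / 8) * ((1 + Real.sqrt
            (36 * Real.sqrt (Bu * c l ^ 2 / ((n : ℝ) * Δ i ^ 2)) + 1)) /
          Real.sqrt (Bu * c l ^ 2 / ((n : ℝ) * Δ i ^ 2))) ^ 2 ≤ ε i ∧
        ε i ≤ 1 / Real.sqrt (Bl * c u ^ 2 /
          (Δ i ^ 2 * ((n : ℝ) - Bl / ⨅ j, hW.1.eigenvalues j)))) :
    Bl ≤ (((Matrix.diagonal c)ᵀ * (Matrix.diagonal fun i => σ i ^ 2)⁻¹ *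
          Matrix.diagonal c + S⁻¹)⁻¹).trace ∧
      (((Matrix.diagonal c)ᵀ * (Matrix.diagonal fun i => σ i ^ 2)⁻¹ *
          Matrix.diagonal c + S⁻¹)⁻¹).trace ≤ Bu := by
  have : Nonempty (Fin n) := ⟨u⟩
  obtain ⟨j₀, hj₀⟩ := exists_eq_ciInf_of_finite (f := hW.1.eigenvalues)
  set μ := ⨅ j, hW.1.eigenvalues j
  have hμ : 0 < μ := hj₀ ▸ hW.eigenvalues_pos j₀
  have hμW : μ • 1 ≤ W := hW.1.smul_one_le fun j => ciInf_le (Set.finite_range _).bddBelow j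
  have hWS : W ≤ S := le_of_eq_riccati hS.posSemidef (PosDef.diagonal fun i => by
    have := hσ i; positivity) hric
  rw [diagonal_transpose_mul_inv_diagonal_mul c fun i => pow_ne_zero 2 (hσ i).ne']
  have hn : (0 : ℝ) < n := Nat.cast_pos.mpr u.pos
  have hd : 0 < (n : ℝ) - Bl / μ := by rw [sub_pos, div_lt_iff₀ hμ]; exact hBl2
  have hg : ∀ i, 0 < c i ^ 2 / σ i ^ 2 := fun i => by have := hc i; have := hσ i; positivity
  have hstd : ∀ i, σ i = gaussianMechanismStd (Δ i) (ε i) (Kd i) := hσdef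
  have hσu : Bl * c u ^ 2 / (n - Bl / μ) ≤ σ u ^ 2 := hstd u ▸ div_le_gaussianMechanismStd_sq
    (hΔ u) (hε u) (hKd u).1 (by have := hc u; positivity) hd (hcal u).2
  have hσl : σ l ^ 2 ≤ Bu * c l ^ 2 / n := hstd l ▸ gaussianMechanismStd_sq_le_div
    (hΔ l) (hKd l).2 (by have := hc l; positivity) hn (hcal l).1 (hstd l ▸ (hσ l).le)
  constructor
  · calc Bl ≤ n / (c u ^ 2 / σ u ^ 2 + μ⁻¹) := le_div_sq_div_sq_add_inv hBl1 hμ (hσ u) hBl2 hσu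
      _ ≤ _ := by
        simpa using card_div_le_trace_inv ((PosDef.diagonal hg).add hS.inv)
          (diagonal_add_inv_le_smul_one hu hμ hμW hWS)
  · calc _ ≤ ∑ i, (c i ^ 2 / σ i ^ 2)⁻¹ := by
          simpa [inv_diagonal_of_ne_zero fun i => (hg i).ne'] using
            (PosDef.diagonal hg).trace_inv_add_le hS.inv.posSemidef
      _ ≤ ∑ _i, (c l ^ 2 / σ l ^ 2)⁻¹ := Finset.sum_le_sum fun i _ => inv_anti₀ (hg l) (hl i)
      _ = n * (c l ^ 2 / σ l ^ 2)⁻¹ := by simp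
      _ ≤ Bu := mul_inv_sq_div_sq_le hn (hc l) hσl

/-- Privacy calibration for a posteriori estimation error: if each `εᵢ` lies
in the window `[(1/8)((1+√(36η₄ᵢ+1))/η₄ᵢ)², 1/η₃ᵢ]`, then
`B_l ≤ tr Σ̄ ≤ B_u` with `Σ̄ = (Cᵀ V⁻¹ C + Σ⁻¹)⁻¹`. -/
theorem privacy_calibration_aposteriori {n : ℕ} (hn : 1 ≤ n)
    (A W S : Matrix (Fin n) (Fin n) ℝ)
    (c σ : Fin n → ℝ) (hc : ∀ i, 0 < c i) (hσ : ∀ i, 0 < σ i)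
    (hW : W.PosDef) (hS : S.PosDef)
    (hric : S = A * S * Aᵀ -
        A * S * (Matrix.diagonal c)ᵀ *
          (Matrix.diagonal c * S * (Matrix.diagonal c)ᵀ +
            Matrix.diagonal fun i => σ i ^ 2)⁻¹ *
          Matrix.diagonal c * S * Aᵀ + W)
    (Δ ε Kd : Fin n → ℝ) (hΔ : ∀ i, 0 < Δ i) (hε : ∀ i, 0 < ε i)
    (hKd : ∀ i, 1 ≤ Kd i ∧ Kd i ≤ 4.5)
    (hσdef : ∀ i, σ i = Δ i / (2 * ε i) * (Kd i + Real.sqrt (Kd i ^ 2 + 2 * ε i)))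
    (Bl Bu : ℝ) (hBl1 : 0 < Bl)
    (hBl2 : Bl < (n : ℝ) * ⨅ j, hW.1.eigenvalues j)
    (hBu : 0 < Bu)
    (u l : Fin n)
    (hu : ∀ i, c i ^ 2 / σ i ^ 2 ≤ c u ^ 2 / σ u ^ 2)
    (hl : ∀ i, c l ^ 2 / σ l ^ 2 ≤ c i ^ 2 / σ i ^ 2)
    (hcal : ∀ i,
      (1 / 8) * ((1 + Real.sqrt
            (36 * Real.sqrt (Bu * c l ^ 2 / ((n : ℝ) * Δ i ^ 2)) + 1)) /
          Real.sqrt (Bu * c l ^ 2 / ((n : ℝ) * Δ i ^ 2))) ^ 2 ≤ ε i ∧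
        ε i ≤ 1 / Real.sqrt (Bl * c u ^ 2 /
          (Δ i ^ 2 * ((n : ℝ) - Bl / ⨅ j, hW.1.eigenvalues j)))) :
    Bl ≤ (((Matrix.diagonal c)ᵀ * (Matrix.diagonal fun i => σ i ^ 2)⁻¹ *
          Matrix.diagonal c + S⁻¹)⁻¹).trace ∧
      (((Matrix.diagonal c)ᵀ * (Matrix.diagonal fun i => σ i ^ 2)⁻¹ *
          Matrix.diagonal c + S⁻¹)⁻¹).trace ≤ Bu :=
  privacy_calibration_aposteriori_general A W S c σ hc hσ hW hS hric Δ ε Kd hΔ hε hKd hσdef Bl Bu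
    hBl1 hBl2 hBu u l hu hl hcal
end
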